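/- arXiv:2503.15240 — 5 statements merged into one kernel-verified Lean document; each statement's English description precedes it below -/
import Mathlib

section
/- Let G be a finite p-group with p odd, and suppose G/Z_{n-1}(G) is powerful (i.e., [G,G] ≤ G^p Z_{n-1}(G)). Then γ_n(G), the n-th term of the lower central series, is powerfully embedded in G, i.e., [γ_n(G), G] ≤ γ_n(G)^p. -/
/-!
Induct on `n`, with `N = γ_n(G)` and `K = N^p [N, G, G]` (Mathlib indexes the lower central
series from `0`, so `γ_n(G)` is `lowerCentralSeries (n - 1)`). The hypothesis passes to
`Ḡ = G/K` and then, one index lower, to `Ḡ/Z(Ḡ)`, so by induction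
`γ_n(Ḡ) ≤ γ_{n-1}(Ḡ)^p Z(Ḡ)`. In `Ḡ` the group `γ_n(Ḡ)` has exponent `p` and `γ_{n+2}(Ḡ) = 1`;
since `(ab)^p = a^p b^p c^(p(p-1)/2)` when `b a = a b c` with `c` central, and `p ∣ p(p-1)/2` for
`p` odd, the `p`-th powers of elements of `γ_{n-1}(Ḡ)` are central. So `γ_n(Ḡ)` is central, i.e.
`[N, G] ≤ N^p [[N, G], G]`, and nilpotency of `G` removes the last factor.
-/

/-- The subgroup generated by `k`-th powers of elements of `N`. -/
def sPow {G : Type*} [Group G] (N : Subgroup G) (k : ℕ) : Subgroup G :=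
  Subgroup.closure ((· ^ k) '' (N : Set G))

open QuotientGroup
open scoped commutatorElement

section Commutators

variable {G : Type*} [Group G] {a b c : G}

theorem pow_mul_eq_mul_pow_mul_pow (h : b * a = a * b * c) (hcb : Commute c b) (k : ℕ) :
    b ^ k * a = a * b ^ k * c ^ k := by
  have hconj : a⁻¹ * b * a = b * c := by rw [mul_assoc, h]; group
  have hpow : (a⁻¹ * b * a) ^ k = a⁻¹ * b ^ k * a := by simpa using conj_pow (a := a⁻¹) (b := b)
  calc b ^ k * a = a * (a⁻¹ * b * a) ^ k := by rw [hpow]; group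
    _ = a * b ^ k * c ^ k := by rw [hconj, hcb.symm.mul_pow, mul_assoc]

theorem mul_pow_eq_pow_mul_pow_mul_pow_choose_two (h : b * a = a * b * c) (hca : Commute c a)
    (hcb : Commute c b) (k : ℕ) : (a * b) ^ k = a ^ k * b ^ k * c ^ k.choose 2 := by
  induction k with
  | zero => simp
  | succ k ih =>
    calc (a * b) ^ (k + 1) = a ^ k * b ^ k * (c ^ k.choose 2 * a) * b := by
          rw [pow_succ, ih]; group
      _ = a ^ k * (b ^ k * a) * (c ^ k.choose 2 * b) := by rw [(hca.pow_left _).eq]; group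
      _ = a ^ (k + 1) * b ^ k * (c ^ k * b) * c ^ k.choose 2 := by
          rw [pow_mul_eq_mul_pow_mul_pow h hcb, (hcb.pow_left _).eq, pow_succ']; group
      _ = a ^ (k + 1) * b ^ (k + 1) * c ^ (k + 1).choose 2 := by
          rw [(hcb.pow_left _).eq, Nat.choose_succ_succ, Nat.choose_one_right, pow_succ,
            pow_add]
          group

theorem Odd.dvd_choose_two {p : ℕ} (hp : Odd p) : p ∣ p.choose 2 := by
  obtain ⟨t, rfl⟩ := hp
  exact ⟨t, by
    rw [Nat.choose_two_right, Nat.add_sub_cancel, mul_left_comm,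
      Nat.mul_div_cancel_left _ two_pos]⟩

theorem mul_pow_eq_pow_mul_pow_of_odd {p : ℕ} (hp : Odd p) (h : b * a = a * b * c)
    (hca : Commute c a) (hcb : Commute c b) (hc : c ^ p = 1) : (a * b) ^ p = a ^ p * b ^ p := by
  obtain ⟨s, hs⟩ := hp.dvd_choose_two
  rw [mul_pow_eq_pow_mul_pow_mul_pow_choose_two h hca hcb, hs, pow_mul, hc, one_pow, mul_one]

theorem commutatorElement_pow_left_eq_one {p : ℕ} (hp : Odd p) {x g : G} (hb : ⁅x, g⁆ ^ p = 1)
    (hc : ⁅⁅x, g⁆⁻¹, x⁆ ∈ Subgroup.center G) (hcp : ⁅⁅x, g⁆⁻¹, x⁆ ^ p = 1) : ⁅x ^ p, g⁆ = 1 := by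
  have hcomm : ∀ y, Commute ⁅⁅x, g⁆⁻¹, x⁆ y := fun y => ((Subgroup.mem_center_iff.mp hc) y).symm
  have hmul : ⁅x, g⁆ * x⁻¹ = x⁻¹ * ⁅x, g⁆ * ⁅⁅x, g⁆⁻¹, x⁆ := by
    simp only [commutatorElement_def]; group
  have hconj : x⁻¹ * ⁅x, g⁆ = g * x⁻¹ * g⁻¹ := by rw [commutatorElement_def]; group
  calc ⁅x ^ p, g⁆ = x ^ p * (x⁻¹ * ⁅x, g⁆) ^ p := by
        rw [hconj, conj_pow, commutatorElement_def, inv_pow]; group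
    _ = 1 := by
        rw [mul_pow_eq_pow_mul_pow_of_odd hp hmul (hcomm _) (hcomm _) hcp, inv_pow, hb]
        group

end Commutators

namespace Subgroup

variable {G H : Type*} [Group G] [Group H]

theorem pow_mem_sPow {N : Subgroup G} {x : G} (hx : x ∈ N) (k : ℕ) : x ^ k ∈ sPow N k :=
  subset_closure ⟨x, hx, rfl⟩

theorem map_sPow (f : G →* H) (N : Subgroup G) (k : ℕ) : (sPow N k).map f = sPow (N.map f) k := by
  rw [sPow, sPow, MonoidHom.map_closure, coe_map, Set.image_image, Set.image_image]
  simp only [map_pow]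

instance sPow_normal (N : Subgroup G) [hN : N.Normal] (k : ℕ) : (sPow N k).Normal where
  conj_mem x hx g := by
    have hle : sPow N k ≤ (sPow N k).comap (MulAut.conj g).toMonoidHom := by
      rw [sPow, closure_le]
      rintro _ ⟨y, hy, rfl⟩
      exact subset_closure ⟨g * y * g⁻¹, hN.conj_mem y hy g, conj_pow⟩
    exact hle hx

theorem map_lowerCentralSeries_top {f : G →* H} (hf : Function.Surjective f) (n : ℕ) :
    ((⊤ : Subgroup G).lowerCentralSeries n).map f = (⊤ : Subgroup H).lowerCentralSeries n := by
  rw [map_lowerCentralSeries, map_top_of_surjective f hf]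

theorem commutator_top_le_sPow_sup_of_surjective {p : ℕ} {f : G →* H} (hf : Function.Surjective f)
    {A : Subgroup G} {B : Subgroup H} (hAB : A.map f ≤ B)
    (h : ⁅(⊤ : Subgroup G), ⊤⁆ ≤ sPow ⊤ p ⊔ A) : ⁅(⊤ : Subgroup H), ⊤⁆ ≤ sPow ⊤ p ⊔ B :=
  calc ⁅(⊤ : Subgroup H), ⊤⁆ = (⁅(⊤ : Subgroup G), ⊤⁆ : Subgroup G).map f := by
        rw [map_commutator, map_top_of_surjective f hf]
    _ ≤ (sPow ⊤ p ⊔ A).map f := map_mono h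
    _ = sPow ⊤ p ⊔ A.map f := by rw [map_sup, map_sPow, map_top_of_surjective f hf]
    _ ≤ sPow ⊤ p ⊔ B := sup_le_sup_left hAB _

theorem eq_bot_of_le_commutator_top [Group.IsNilpotent G] {K : Subgroup G} (h : K ≤ ⁅K, ⊤⁆) :
    K = ⊥ := by
  obtain ⟨c, hc⟩ := nilpotent_iff_lowerCentralSeries.mp ‹Group.IsNilpotent G›
  have hle : ∀ j, K ≤ (⊤ : Subgroup G).lowerCentralSeries j := by
    intro j
    induction j with
    | zero => exact le_top
    | succ j ih => exact h.trans (commutator_mono ih le_rfl)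
  exact le_bot_iff.mp (hc ▸ hle c)

theorem le_of_le_sup_commutator_top [Group.IsNilpotent G] {K A : Subgroup G} [A.Normal]
    (h : K ≤ A ⊔ ⁅K, ⊤⁆) : K ≤ A := by
  have hsurj : Function.Surjective (mk' A) := mk'_surjective A
  suffices K.map (mk' A) = ⊥ by rwa [map_eq_bot_iff, ker_mk'] at this
  refine eq_bot_of_le_commutator_top ?_
  calc K.map (mk' A) ≤ (A ⊔ ⁅K, ⊤⁆).map (mk' A) := map_mono h
    _ = ⁅K.map (mk' A), ⊤⁆ := by
        rw [map_sup, map_commutator, map_top_of_surjective _ hsurj,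
          (map_eq_bot_iff _).mpr (ker_mk' A).ge, bot_sup_eq]

theorem sPow_le_center {p : ℕ} (hp : Odd p) (N : Subgroup G)
    (h₁ : sPow ⁅N, (⊤ : Subgroup G)⁆ p = ⊥)
    (h₂ : ⁅⁅⁅N, (⊤ : Subgroup G)⁆, (⊤ : Subgroup G)⁆, (⊤ : Subgroup G)⁆ = ⊥) :
    sPow N p ≤ center G := by
  rw [sPow, closure_le]
  rintro _ ⟨x, hx, rfl⟩
  refine mem_center_iff.mpr fun g => (commutatorElement_eq_one_iff_mul_comm.mp ?_).symm
  have hexp : ∀ u ∈ ⁅N, (⊤ : Subgroup G)⁆, u ^ p = 1 := fun u hu => by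
    rw [← mem_bot, ← h₁]
    exact pow_mem_sPow hu p
  have hb : ⁅x, g⁆ ∈ ⁅N, (⊤ : Subgroup G)⁆ := commutator_mem_commutator hx (mem_top g)
  have hc : ⁅⁅x, g⁆⁻¹, x⁆ ∈ ⁅N, (⊤ : Subgroup G)⁆ := by
    rw [← commutatorElement_inv]
    exact inv_mem (commutator_mem_commutator hx (mem_top _))
  have hcZ : ⁅⁅x, g⁆⁻¹, x⁆ ∈ center G := commutator_top_right_eq_bot_iff_le_center.mp h₂
    (commutator_mem_commutator (inv_mem hb) (mem_top x))
  exact commutatorElement_pow_left_eq_one hp (hexp _ hb) hcZ (hexp _ hc)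

theorem lowerCentralSeries_add_two_eq_bot {p : ℕ} (hp : Odd p) (m : ℕ)
    (hquot : ⁅(⊤ : Subgroup (G ⧸ center G)).lowerCentralSeries m, ⊤⁆ ≤
      sPow ((⊤ : Subgroup (G ⧸ center G)).lowerCentralSeries m) p)
    (h₁ : sPow ((⊤ : Subgroup G).lowerCentralSeries (m + 1)) p = ⊥)
    (h₂ : (⊤ : Subgroup G).lowerCentralSeries (m + 3) = ⊥) :
    (⊤ : Subgroup G).lowerCentralSeries (m + 2) = ⊥ := by
  have hle : (⊤ : Subgroup G).lowerCentralSeries (m + 1) ≤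
      sPow ((⊤ : Subgroup G).lowerCentralSeries m) p ⊔ center G := by
    rw [← ker_mk' (center G), ← map_le_map_iff, map_sPow,
      map_lowerCentralSeries_top (mk'_surjective _), map_lowerCentralSeries_top (mk'_surjective _)]
    exact hquot
  exact lowerCentralSeries_succ_eq_bot ⊤ (hle.trans (sup_le (sPow_le_center hp _ h₁ h₂) le_rfl))

theorem commutator_lowerCentralSeries_le_sPow {p : ℕ} (hp : Odd p) (m : ℕ)
    [Group.IsNilpotent G] (hpow : ⁅(⊤ : Subgroup G), ⊤⁆ ≤ sPow ⊤ p ⊔ upperCentralSeries G m) :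
    ⁅(⊤ : Subgroup G).lowerCentralSeries m, ⊤⁆ ≤
      sPow ((⊤ : Subgroup G).lowerCentralSeries m) p := by
  induction m generalizing G with
  | zero => simpa using hpow
  | succ m ih =>
    set N := (⊤ : Subgroup G).lowerCentralSeries (m + 1)
    set K := sPow N p ⊔ (⊤ : Subgroup G).lowerCentralSeries (m + 3)
    have hsurj : Function.Surjective (mk' K) := mk'_surjective K
    have hquot : ⁅(⊤ : Subgroup (G ⧸ K)), ⊤⁆ ≤ sPow ⊤ p ⊔ upperCentralSeries (G ⧸ K) (m + 1) :=
      commutator_top_le_sPow_sup_of_surjective hsurj (upperCentralSeries.map hsurj _) hpow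
    have hquot' : ⁅(⊤ : Subgroup ((G ⧸ K) ⧸ center (G ⧸ K))), ⊤⁆ ≤
        sPow ⊤ p ⊔ upperCentralSeries ((G ⧸ K) ⧸ center (G ⧸ K)) m :=
      commutator_top_le_sPow_sup_of_surjective (mk'_surjective _)
        (map_le_iff_le_comap.mpr (comap_upperCentralSeries_quotient_center m).ge) hquot
    have h₁ : sPow ((⊤ : Subgroup (G ⧸ K)).lowerCentralSeries (m + 1)) p = ⊥ := by
      rw [← map_lowerCentralSeries_top hsurj, ← map_sPow, map_eq_bot_iff, ker_mk']
      exact le_sup_left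
    have h₂ : (⊤ : Subgroup (G ⧸ K)).lowerCentralSeries (m + 3) = ⊥ := by
      rw [← map_lowerCentralSeries_top hsurj, map_eq_bot_iff, ker_mk']
      exact le_sup_right
    have hK : ⁅N, ⊤⁆ ≤ K := by
      rw [← ker_mk' K, ← map_eq_bot_iff]
      exact (map_lowerCentralSeries_top hsurj (m + 2)).trans
        (lowerCentralSeries_add_two_eq_bot hp m (ih hquot') h₁ h₂)
    exact le_of_le_sup_commutator_top hK

end Subgroup

theorem stmt_0_general {p n : ℕ} (hp : p.Prime) (hodd : Odd p)
    {G : Type*} [Group G] [Finite G] (hG : IsPGroup p G)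
    (hpow : ⁅(⊤ : Subgroup G), (⊤ : Subgroup G)⁆ ≤
      sPow (⊤ : Subgroup G) p ⊔ upperCentralSeries G (n - 1)) :
    ⁅(⊤ : Subgroup G).lowerCentralSeries (n - 1), (⊤ : Subgroup G)⁆ ≤
      sPow ((⊤ : Subgroup G).lowerCentralSeries (n - 1)) p := by
  have : Fact p.Prime := ⟨hp⟩
  have : Group.IsNilpotent G := hG.isNilpotent
  exact Subgroup.commutator_lowerCentralSeries_le_sPow hodd (n - 1) hpow

theorem stmt_0 {p n : ℕ} (hp : p.Prime) (hodd : Odd p) (hn : 1 ≤ n)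
    {G : Type*} [Group G] [Finite G] (hG : IsPGroup p G)
    (hpow : ⁅(⊤ : Subgroup G), (⊤ : Subgroup G)⁆ ≤
      sPow (⊤ : Subgroup G) p ⊔ upperCentralSeries G (n - 1)) :
    ⁅(⊤ : Subgroup G).lowerCentralSeries (n - 1), (⊤ : Subgroup G)⁆ ≤
      sPow ((⊤ : Subgroup G).lowerCentralSeries (n - 1)) p :=
  stmt_0_general hp hodd hG hpow
end

section
/- Let G be a finite p-group with p odd such that G/Z_{n-1}(G) is powerful. Then for every k ≥ 1, γ_{n+k}(G) ≤ γ_n(G)^p · γ_{n+k+1}(G). -/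
open scoped commutatorElement

section sPow

variable {G : Type*} [Group G]

theorem pow_mem_sPow {N : Subgroup G} {x : G} (hx : x ∈ N) (k : ℕ) : x ^ k ∈ sPow N k :=
  Subgroup.subset_closure ⟨x, hx, rfl⟩

theorem sPow_mono {N M : Subgroup G} (h : N ≤ M) (k : ℕ) : sPow N k ≤ sPow M k :=
  Subgroup.closure_mono (Set.image_mono h)

theorem sPow_le_iff {N M : Subgroup G} {k : ℕ} : sPow N k ≤ M ↔ ∀ x ∈ N, x ^ k ∈ M := by
  rw [sPow, Subgroup.closure_le, Set.image_subset_iff]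
  rfl

theorem map_sPow {Q : Type*} [Group Q] (f : G →* Q) (N : Subgroup G) (k : ℕ) :
    (sPow N k).map f = sPow (N.map f) k := by
  rw [sPow, sPow, MonoidHom.map_closure, Subgroup.coe_map]
  exact congrArg Subgroup.closure (Set.image_comm fun x => map_pow f x k)

instance sPow_normal (N : Subgroup G) [N.Normal] (k : ℕ) : (sPow N k).Normal :=
  Subgroup.normal_iff_map_conj_eq.2 fun g => by rw [map_sPow, Subgroup.Normal.map_conj_eq]

end sPow

section Commutator

variable {G : Type*} [Group G]

theorem commutatorElement_pow_left {x g : G} (hzx : Commute ⁅x, ⁅x, g⁆⁆ x)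
    (hzu : Commute ⁅x, ⁅x, g⁆⁆ ⁅x, g⁆) (m : ℕ) :
    ⁅x ^ m, g⁆ = ⁅x, ⁅x, g⁆⁆ ^ m.choose 2 * ⁅x, g⁆ ^ m := by
  set u := ⁅x, g⁆
  set z := ⁅x, u⁆
  have hconj : x * u * x⁻¹ = z * u := by simp only [z]; group
  induction m with
  | zero => simp
  | succ m ih =>
    calc ⁅x ^ (m + 1), g⁆ = x * ⁅x ^ m, g⁆ * x⁻¹ * u := by
          simp only [u, pow_succ', commutatorElement_def]; group
      _ = z ^ m.choose 2 * (x * u * x⁻¹) ^ m * u := by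
          rw [ih, conj_pow, ← mul_assoc x, ← (hzx.pow_left _).eq]; group
      _ = z ^ (m + 1).choose 2 * u ^ (m + 1) := by
          rw [hconj, hzu.mul_pow, Nat.choose_succ_succ', Nat.choose_one_right, pow_add, pow_succ]
          group

theorem commutatorElement_pow_left_eq_one_s1 {x g : G} {p : ℕ} (hp : Odd p)
    (hz : ∀ w : G, Commute ⁅x, ⁅x, g⁆⁆ w) (hzp : ⁅x, ⁅x, g⁆⁆ ^ p = 1) (hup : ⁅x, g⁆ ^ p = 1) :
    ⁅x ^ p, g⁆ = 1 := by
  obtain ⟨t, rfl⟩ := hp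
  have hchoose : (2 * t + 1).choose 2 = (2 * t + 1) * t := by
    rw [Nat.choose_two_right, Nat.add_sub_cancel, mul_left_comm,
      Nat.mul_div_cancel_left _ two_pos]
  rw [commutatorElement_pow_left (hz x) (hz _), hup, hchoose, pow_mul, hzp, one_pow, one_mul]

theorem commutatorElement_pow_left_mem {N : Subgroup G} [N.Normal] {x g : G} {p : ℕ}
    (hp : Odd p) (hz : ∀ w : G, ⁅⁅x, ⁅x, g⁆⁆, w⁆ ∈ N) (hzp : ⁅x, ⁅x, g⁆⁆ ^ p ∈ N)
    (hup : ⁅x, g⁆ ^ p ∈ N) : ⁅x ^ p, g⁆ ∈ N := by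
  let π := QuotientGroup.mk' N
  have hπ : ∀ y, π y = 1 ↔ y ∈ N := QuotientGroup.eq_one_iff
  rw [← hπ, map_commutatorElement, map_pow]
  refine commutatorElement_pow_left_eq_one_s1 hp (fun w => ?_) ?_ ?_
  · obtain ⟨w, rfl⟩ := QuotientGroup.mk'_surjective N w
    rw [← commutatorElement_eq_one_iff_commute]
    simpa only [map_commutatorElement] using (hπ _).2 (hz w)
  · simpa only [map_commutatorElement, map_pow] using (hπ _).2 hzp
  · simpa only [map_commutatorElement, map_pow] using (hπ _).2 hup

end Commutator

def IsPowerfulModUpperCentralSeries (G : Type*) [Group G] (p a : ℕ) : Prop :=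
  ⁅(⊤ : Subgroup G), (⊤ : Subgroup G)⁆ ≤
    sPow (⊤ : Subgroup G) p ⊔ Subgroup.upperCentralSeries G a

namespace Subgroup

variable {G : Type*} [Group G]

theorem commutator_sup_top_le {A B : Subgroup G} [hA : A.Normal] [B.Normal] :
    ⁅A ⊔ B, (⊤ : Subgroup G)⁆ ≤ A ⊔ ⁅B, ⊤⁆ := by
  rw [commutator_le]
  intro x hx g _
  obtain ⟨a, ha, b, hb, rfl⟩ := mem_sup_of_normal_left.1 hx
  have hsplit : ⁅a * b, g⁆ = a * ⁅b, g⁆ * a⁻¹ * (a * (g * a⁻¹ * g⁻¹)) := by group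
  rw [hsplit, sup_comm]
  exact mul_mem_sup
    ((commutator_normal B ⊤).conj_mem _ (commutator_mem_commutator hb (mem_top g)) a)
    (mul_mem ha (hA.conj_mem _ (inv_mem ha) g))

theorem lowerCentralSeries_le_sup_of_le_sup {A : Subgroup G} [A.Normal] {m : ℕ}
    (h : lowerCentralSeries (⊤ : Subgroup G) m ≤ A ⊔ lowerCentralSeries ⊤ (m + 1)) (i : ℕ)
    (hi : m ≤ i) : lowerCentralSeries (⊤ : Subgroup G) i ≤ A ⊔ lowerCentralSeries ⊤ (i + 1) := by
  induction i, hi using Nat.le_induction with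
  | base => exact h
  | succ i _ ih => exact (commutator_mono ih le_rfl).trans commutator_sup_top_le

theorem lowerCentralSeries_le_upperCentralSeries_sub {c : ℕ}
    (hc : lowerCentralSeries (⊤ : Subgroup G) c = ⊥) (j : ℕ) :
    lowerCentralSeries (⊤ : Subgroup G) j ≤ upperCentralSeries G (c - j) :=
  descending_central_series_ge_lower _ (is_descending_rev_series_of_is_ascending G
    (lowerCentralSeries_eq_bot_iff_upperCentralSeries_eq_top.1 hc)
    (upperCentralSeries_isAscendingCentralSeries G)) j

theorem lowerCentralSeries_add_eq_bot_of_le_upperCentralSeries {i m : ℕ}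
    (h : lowerCentralSeries (⊤ : Subgroup G) i ≤ upperCentralSeries G m) :
    lowerCentralSeries (⊤ : Subgroup G) (i + m) = ⊥ := by
  induction m generalizing i with
  | zero => simpa using h
  | succ m ih =>
    rw [← add_assoc, add_right_comm]
    exact ih (i := i + 1)
      ((commutator_mono h le_rfl).trans (commutator_upperCentralSeries_top_le G m))

theorem sPow_lowerCentralSeries_le_upperCentralSeries {p a : ℕ} (hp : Odd p)
    (h2 : lowerCentralSeries (⊤ : Subgroup G) (a + 2) = ⊥)
    (h3 : sPow (lowerCentralSeries (⊤ : Subgroup G) a) p = ⊥) (j : ℕ) :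
    sPow (lowerCentralSeries (⊤ : Subgroup G) j) p ≤ upperCentralSeries G (a - j) := by
  induction hd : a - j using Nat.strong_induction_on generalizing j with
  | _ d ih =>
    rcases le_or_gt a j with hj | hj
    · exact (sPow_mono (lowerCentralSeries_antitone _ hj) p).trans (h3.le.trans bot_le)
    obtain ⟨d, rfl⟩ : ∃ e, d = e + 1 := ⟨d - 1, by omega⟩
    refine sPow_le_iff.2 fun x hx => mem_upperCentralSeries_succ_iff.2 fun g => ?_
    have hu : ⁅x, g⁆ ∈ lowerCentralSeries (⊤ : Subgroup G) (j + 1) :=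
      commutator_mem_commutator hx (mem_top g)
    have hz : ⁅x, ⁅x, g⁆⁆ ∈ lowerCentralSeries (⊤ : Subgroup G) (j + 2) := by
      rw [← commutatorElement_inv]
      exact inv_mem (commutator_mem_commutator hu (mem_top x))
    refine commutatorElement_pow_left_mem hp (fun w => ?_) ?_ ?_
    · have := lowerCentralSeries_le_upperCentralSeries_sub h2 (j + 3)
        (commutator_mem_commutator hz (mem_top w))
      rwa [show a + 2 - (j + 3) = d by omega] at this
    · exact upperCentralSeries_mono G (by omega : a - (j + 2) ≤ d)
        (ih _ (by omega) (j + 2) rfl (pow_mem_sPow hz p))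
    · exact ih d (by omega) (j + 1) (by omega) (pow_mem_sPow hu p)

theorem lowerCentralSeries_succ_eq_bot_of_sPow_eq_bot {p a : ℕ} (hp : Odd p)
    (hpow : IsPowerfulModUpperCentralSeries G p a)
    (h2 : lowerCentralSeries (⊤ : Subgroup G) (a + 2) = ⊥)
    (h3 : sPow (lowerCentralSeries (⊤ : Subgroup G) a) p = ⊥) :
    lowerCentralSeries (⊤ : Subgroup G) (a + 1) = ⊥ := by
  have hGp : sPow ⊤ p ≤ upperCentralSeries G a := by
    simpa using sPow_lowerCentralSeries_le_upperCentralSeries hp h2 h3 0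
  rw [add_comm]
  exact lowerCentralSeries_add_eq_bot_of_le_upperCentralSeries (i := 1)
    (hpow.trans (sup_le hGp le_rfl))

theorem _root_.IsPowerfulModUpperCentralSeries.of_surjective {G Q : Type*} [Group G] [Group Q]
    {p a : ℕ} (hG : IsPowerfulModUpperCentralSeries G p a) {f : G →* Q}
    (hf : Function.Surjective f) : IsPowerfulModUpperCentralSeries Q p a :=
  calc ⁅(⊤ : Subgroup Q), ⊤⁆ = (⁅(⊤ : Subgroup G), (⊤ : Subgroup G)⁆ : Subgroup G).map f := by
        rw [map_commutator, map_top_of_surjective f hf]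
    _ ≤ (sPow ⊤ p ⊔ upperCentralSeries G a).map f := map_mono hG
    _ = sPow ⊤ p ⊔ (upperCentralSeries G a).map f := by
        rw [map_sup, map_sPow, map_top_of_surjective f hf]
    _ ≤ sPow ⊤ p ⊔ upperCentralSeries Q a := sup_le_sup_left (upperCentralSeries.map hf a) _

theorem lowerCentralSeries_succ_le_sPow_sup {p a : ℕ} (hp : Odd p)
    (hpow : IsPowerfulModUpperCentralSeries G p a) :
    lowerCentralSeries (⊤ : Subgroup G) (a + 1) ≤
      sPow (lowerCentralSeries ⊤ a) p ⊔ lowerCentralSeries ⊤ (a + 2) := by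
  set M := sPow (lowerCentralSeries (⊤ : Subgroup G) a) p ⊔ lowerCentralSeries ⊤ (a + 2)
  let f := QuotientGroup.mk' M
  have hf : Function.Surjective f := QuotientGroup.mk'_surjective M
  have hmap (i : ℕ) : (lowerCentralSeries (⊤ : Subgroup G) i).map f = lowerCentralSeries ⊤ i := by
    rw [map_lowerCentralSeries, map_top_of_surjective f hf]
  have hker {H : Subgroup G} (hH : H ≤ M) : H.map f = ⊥ := by
    rwa [map_eq_bot_iff, QuotientGroup.ker_mk']
  rw [← QuotientGroup.ker_mk' M, ← map_eq_bot_iff, hmap]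
  refine lowerCentralSeries_succ_eq_bot_of_sPow_eq_bot hp (hpow.of_surjective hf) ?_ ?_
  · rw [← hmap]
    exact hker le_sup_right
  · rw [← hmap, ← map_sPow]
    exact hker le_sup_left

end Subgroup

theorem stmt_1_general {p n : ℕ} (hodd : Odd p)
    {G : Type*} [Group G]
    (hpow : ⁅(⊤ : Subgroup G), (⊤ : Subgroup G)⁆ ≤
      sPow (⊤ : Subgroup G) p ⊔ upperCentralSeries G (n - 1)) :
    ∀ k : ℕ, 1 ≤ k →
      Subgroup.lowerCentralSeries (⊤ : Subgroup G) (n - 1 + k) ≤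
        sPow (Subgroup.lowerCentralSeries (⊤ : Subgroup G) (n - 1)) p ⊔ Subgroup.lowerCentralSeries (⊤ : Subgroup G) (n + k) := by
  intro k hk
  rcases n with _ | a
  · simp
  · rw [Nat.add_sub_cancel] at hpow ⊢
    rw [add_right_comm]
    exact Subgroup.lowerCentralSeries_le_sup_of_le_sup
      (Subgroup.lowerCentralSeries_succ_le_sPow_sup hodd hpow) (a + k) (by omega)

theorem stmt_1 {p n : ℕ} (hp : p.Prime) (hodd : Odd p) (hn : 1 ≤ n)
    {G : Type*} [Group G] [Finite G] (hG : IsPGroup p G)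
    (hpow : ⁅(⊤ : Subgroup G), (⊤ : Subgroup G)⁆ ≤
      sPow (⊤ : Subgroup G) p ⊔ upperCentralSeries G (n - 1)) :
    ∀ k : ℕ, 1 ≤ k →
      Subgroup.lowerCentralSeries (⊤ : Subgroup G) (n - 1 + k) ≤
        sPow (Subgroup.lowerCentralSeries (⊤ : Subgroup G) (n - 1)) p ⊔ Subgroup.lowerCentralSeries (⊤ : Subgroup G) (n + k) :=
  stmt_1_general hodd hpow
end

section
/- Let G be a group and let j ≤ k be positive integers. Then [γ_j(G), Z_k(G)] ≤ Z_{k-j}(G). -/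
/-!
Induction on `m`, writing `γ_{m+1} = [γ_m, G]`. By the three subgroups lemma modulo the normal
subgroup `Z_{k-m-2}`, it suffices that `[[G, Z_k], γ_m] ≤ [Z_{k-1}, γ_m]` and
`[[Z_k, γ_m], G] ≤ [Z_{k-m-1}, G]` both lie in `Z_{k-m-2}`, which is the induction hypothesis
together with `[Z_k, G] ≤ Z_{k-1}`.
-/

namespace Subgroup

variable {G : Type*} [Group G]

theorem commutator_commutator_le_of_rotate {H₁ H₂ H₃ N : Subgroup G} [N.Normal]
    (h₁ : ⁅⁅H₂, H₃⁆, H₁⁆ ≤ N) (h₂ : ⁅⁅H₃, H₁⁆, H₂⁆ ≤ N) : ⁅⁅H₁, H₂⁆, H₃⁆ ≤ N := by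
  rw [← QuotientGroup.ker_mk' N, ← map_eq_bot_iff] at h₁ h₂ ⊢
  simp only [map_commutator] at h₁ h₂ ⊢
  exact commutator_commutator_eq_bot_of_rotate h₁ h₂

theorem commutator_upperCentralSeries_top_le_pred (k : ℕ) :
    ⁅upperCentralSeries G k, ⊤⁆ ≤ upperCentralSeries G (k - 1) := by
  cases k with
  | zero => simp
  | succ k => exact commutator_upperCentralSeries_top_le G k

/-- With truncated subtraction this also covers `k ≤ m`, where the commutator is trivial. -/
theorem commutator_lowerCentralSeries_upperCentralSeries_le (m k : ℕ) :
    ⁅(⊤ : Subgroup G).lowerCentralSeries m, upperCentralSeries G k⁆ ≤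
      upperCentralSeries G (k - (m + 1)) := by
  induction m generalizing k with
  | zero =>
    rw [lowerCentralSeries_zero, commutator_comm]
    exact commutator_upperCentralSeries_top_le_pred k
  | succ m ih =>
    rw [lowerCentralSeries_succ]
    apply commutator_commutator_le_of_rotate
    · calc ⁅⁅⊤, upperCentralSeries G k⁆, (⊤ : Subgroup G).lowerCentralSeries m⁆
          ≤ ⁅upperCentralSeries G (k - 1), (⊤ : Subgroup G).lowerCentralSeries m⁆ := by
            rw [commutator_comm ⊤]
            exact commutator_mono (commutator_upperCentralSeries_top_le_pred k) le_rfl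
        _ ≤ upperCentralSeries G (k - 1 - (m + 1)) := by
            rw [commutator_comm]
            exact ih (k - 1)
        _ = upperCentralSeries G (k - (m + 1 + 1)) := by rw [Nat.sub_sub, Nat.add_comm 1]
    · calc ⁅⁅upperCentralSeries G k, (⊤ : Subgroup G).lowerCentralSeries m⁆, ⊤⁆
          ≤ ⁅upperCentralSeries G (k - (m + 1)), ⊤⁆ := by
            rw [commutator_comm (upperCentralSeries G k)]
            exact commutator_mono (ih k) le_rfl
        _ ≤ upperCentralSeries G (k - (m + 1) - 1) :=
            commutator_upperCentralSeries_top_le_pred _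
        _ = upperCentralSeries G (k - (m + 1 + 1)) := by rw [Nat.sub_sub]

end Subgroup

theorem stmt_9_general {G : Type*} [Group G] (j k : ℕ) (hj : 1 ≤ j) :
    ⁅(⊤ : Subgroup G).lowerCentralSeries (j - 1), Subgroup.upperCentralSeries G k⁆ ≤
      Subgroup.upperCentralSeries G (k - j) := by
  obtain ⟨m, rfl⟩ := Nat.exists_eq_add_of_le' hj
  simpa using Subgroup.commutator_lowerCentralSeries_upperCentralSeries_le m k

theorem stmt_9 {G : Type*} [Group G] (j k : ℕ) (hj : 1 ≤ j) (hjk : j ≤ k) :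
    ⁅(⊤ : Subgroup G).lowerCentralSeries (j - 1), Subgroup.upperCentralSeries G k⁆ ≤
      Subgroup.upperCentralSeries G (k - j) :=
  stmt_9_general j k hj
end

section
/- Let p be an odd prime, M and G finite p-groups, μ : M → G a crossed module with M powerful and μ(M) powerfully embedded in G. Then the commutator subgroup of the nonabelian tensor product M ⊗ G satisfies γ_2(M ⊗ G) ≤ M^p ⊗ G (the image of the natural map M^p ⊗ G → M ⊗ G). -/
/-- A crossed module: a homomorphism `μ : M → G` with an action `φ` of `G` on `M`
by automorphisms satisfying the two crossed-module axioms. -/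
structure IsCrossedModule {M G : Type*} [Group M] [Group G]
    (μ : M →* G) (φ : G →* MulAut M) : Prop where
  map_act : ∀ (g : G) (m : M), μ (φ g m) = g * μ m * g⁻¹
  peiffer : ∀ m m' : M, φ (μ m) m' = m * m' * m⁻¹

/-- The defining relations of the nonabelian tensor product `M ⊗ G` of a crossed
module `μ : M → G` (with `G` acting on `M` via `φ`, `M` acting on `G` via `μ` and
conjugation, and `G` acting on itself by conjugation):
`mm' ⊗ g = (ᵐm' ⊗ ᵐg)(m ⊗ g)` and `m ⊗ gg' = (m ⊗ g)(ᵍm ⊗ ᵍg')`. -/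
def tensorRels {M G : Type*} [Group M] [Group G] (μ : M →* G) (φ : G →* MulAut M) :
    Set (FreeGroup (M × G)) :=
  {r | ∃ m m' g, r = FreeGroup.of (m * m', g) *
      (FreeGroup.of (φ (μ m) m', μ m * g * (μ m)⁻¹) * FreeGroup.of (m, g))⁻¹} ∪
  {r | ∃ m g g', r = FreeGroup.of (m, g * g') *
      (FreeGroup.of (m, g) * FreeGroup.of (φ g m, g * g' * g⁻¹))⁻¹}

/-- The nonabelian tensor product `M ⊗ G` of a crossed module. -/
abbrev NATensor {M G : Type*} [Group M] [Group G] (μ : M →* G) (φ : G →* MulAut M) :=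
  PresentedGroup (tensorRels μ φ)

/-- The generator `m ⊗ g` of the nonabelian tensor product. -/
def natTprod {M G : Type*} [Group M] [Group G] (μ : M →* G) (φ : G →* MulAut M)
    (m : M) (g : G) : NATensor μ φ :=
  PresentedGroup.of (m, g)

open scoped commutatorElement

section

variable {G T Q : Type*} [Group G] [MulOneClass T]

theorem Monoid.End.map_mul_apply (ρ : G →* Monoid.End T) (a b : G) (x : T) :
    ρ (a * b) x = ρ a (ρ b x) := by
  rw [map_mul, Monoid.End.coe_mul, Function.comp_apply]

theorem MulAut.map_mul_apply {M : Type*} [Group M] (φ : G →* MulAut M) (a b : G) (m : M) :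
    φ (a * b) m = φ a (φ b m) := by
  rw [map_mul, MulAut.mul_apply]

def precompStabilizer (ρ : G →* Monoid.End T) (f : T → Q) : Subgroup G where
  carrier := {g | ∀ x, f (ρ g x) = f x}
  one_mem' _ := by rw [map_one, Monoid.End.coe_one, id]
  mul_mem' {a b} ha hb x := by rw [Monoid.End.map_mul_apply, ha, hb]
  inv_mem' {a} ha x := by rw [← ha, ← Monoid.End.map_mul_apply, mul_inv_cancel, map_one,
    Monoid.End.coe_one, id]

end

theorem commutator_le_of_conj_eq {G T : Type*} [Group G] [Group T]
    {ρ : G →* Monoid.End T} {κ : T →* G} (hconj : ∀ x y, x * y * x⁻¹ = ρ (κ x) y)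
    {N : Subgroup T} [N.Normal] (hκ : ∀ x, κ x ∈ precompStabilizer ρ ((↑) : T → T ⧸ N)) :
    ⁅(⊤ : Subgroup T), ⊤⁆ ≤ N := by
  refine Subgroup.commutator_le.mpr fun x _ y _ => ?_
  rw [← QuotientGroup.eq_one_iff, commutatorElement_def, hconj, QuotientGroup.mk_mul, hκ x y,
    QuotientGroup.mk_inv, mul_inv_cancel]

section NATensor

variable {M G : Type*} [Group M] [Group G] {μ : M →* G} {φ : G →* MulAut M}

local notation:60 m:61 " ⊗ " g:61 => natTprod μ φ m g

theorem natTprod_mul_left (m m' : M) (g : G) :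
    (m * m' ⊗ g) = (φ (μ m) m' ⊗ μ m * g * (μ m)⁻¹) * (m ⊗ g) :=
  (PresentedGroup.mk_eq_mk_of_mul_inv_mem (Or.inl ⟨m, m', g, rfl⟩)).trans (map_mul _ _ _)

theorem natTprod_mul_right (m : M) (g g' : G) :
    (m ⊗ g * g') = (m ⊗ g) * (φ g m ⊗ g * g' * g⁻¹) :=
  (PresentedGroup.mk_eq_mk_of_mul_inv_mem (Or.inr ⟨m, g, g', rfl⟩)).trans (map_mul _ _ _)

theorem tensorAct_rels (hcm : IsCrossedModule μ φ) (g : G) :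
    ∀ r ∈ tensorRels μ φ, FreeGroup.lift (fun x : M × G => φ g x.1 ⊗ g * x.2 * g⁻¹) r = 1 := by
  rintro r (⟨m, m', h, rfl⟩ | ⟨m, h, h', rfl⟩) <;>
    simp only [map_mul, map_inv, FreeGroup.lift_apply_of, mul_inv_eq_one]
  · have hφ : φ g (φ (μ m) m') = φ (μ (φ g m)) (φ g m') := by
      rw [hcm.map_act, ← MulAut.map_mul_apply, ← MulAut.map_mul_apply]; group
    have hconj : g * (μ m * h * (μ m)⁻¹) * g⁻¹ =
        μ (φ g m) * (g * h * g⁻¹) * (μ (φ g m))⁻¹ := by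
      rw [hcm.map_act]; group
    rw [hφ, hconj]
    exact natTprod_mul_left _ _ _
  · have hmul : g * (h * h') * g⁻¹ = (g * h * g⁻¹) * (g * h' * g⁻¹) := by group
    have hφ : φ g (φ h m) = φ (g * h * g⁻¹) (φ g m) := by
      rw [← MulAut.map_mul_apply, ← MulAut.map_mul_apply]; group
    have hconj : g * (h * h' * h⁻¹) * g⁻¹ =
        (g * h * g⁻¹) * (g * h' * g⁻¹) * (g * h * g⁻¹)⁻¹ := by group
    rw [hmul, hφ, hconj]
    exact natTprod_mul_right _ _ _

def tensorAct (hcm : IsCrossedModule μ φ) : G →* Monoid.End (NATensor μ φ) where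
  toFun g := PresentedGroup.toGroup (tensorAct_rels hcm g)
  map_one' := PresentedGroup.ext fun x => by
    simp only [PresentedGroup.toGroup.of, map_one, MulAut.one_apply, one_mul, inv_one, mul_one]
    rfl
  map_mul' g₁ g₂ := PresentedGroup.ext fun x => by
    simp only [PresentedGroup.toGroup.of, MulAut.map_mul_apply]
    exact congrArg _ (by group)

theorem tensorAct_natTprod (hcm : IsCrossedModule μ φ) (g : G) (m : M) (h : G) :
    tensorAct hcm g (m ⊗ h) = φ g m ⊗ g * h * g⁻¹ :=
  PresentedGroup.toGroup.of (tensorAct_rels hcm g)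

theorem natTprod_mul_left_eq_tensorAct (hcm : IsCrossedModule μ φ) (m m' : M) (g : G) :
    (m * m' ⊗ g) = tensorAct hcm (μ m) (m' ⊗ g) * (m ⊗ g) := by
  rw [tensorAct_natTprod, natTprod_mul_left]

theorem natTprod_mul_right_eq_tensorAct (hcm : IsCrossedModule μ φ) (m : M) (g g' : G) :
    (m ⊗ g * g') = (m ⊗ g) * tensorAct hcm g (m ⊗ g') := by
  rw [tensorAct_natTprod, natTprod_mul_right]

-- Expand `m m' ⊗ g g'` with the two defining relations in either order.
theorem tensorAct_mul_natTprod_comm (hcm : IsCrossedModule μ φ) (m : M) (g : G)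
    (z : NATensor μ φ) :
    tensorAct hcm (μ m * g) z * (m ⊗ g) = (m ⊗ g) * tensorAct hcm (g * μ m) z := by
  suffices key : (tensorAct hcm (μ m * g) : NATensor μ φ →* NATensor μ φ) =
      (MulAut.conj (m ⊗ g)).toMonoidHom.comp (tensorAct hcm (g * μ m)) by
    rw [← eq_mul_inv_iff_mul_eq, DFunLike.congr_fun key z]
    rfl
  refine PresentedGroup.ext fun ⟨m', g'⟩ => ?_
  have expand := (natTprod_mul_left_eq_tensorAct hcm m m' (g * g')).symm.trans
    (natTprod_mul_right_eq_tensorAct hcm (m * m') g g')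
  rw [natTprod_mul_right_eq_tensorAct hcm m' g g', natTprod_mul_right_eq_tensorAct hcm m g g',
    natTprod_mul_left_eq_tensorAct hcm m m' g, natTprod_mul_left_eq_tensorAct hcm m m' g',
    map_mul, map_mul, ← Monoid.End.map_mul_apply, ← Monoid.End.map_mul_apply] at expand
  show tensorAct hcm (μ m * g) (m' ⊗ g') =
    (m ⊗ g) * tensorAct hcm (g * μ m) (m' ⊗ g') * (m ⊗ g)⁻¹
  rw [eq_mul_inv_iff_mul_eq]
  simp only [mul_assoc, mul_left_cancel_iff] at expand
  rw [← mul_assoc, ← mul_assoc] at expand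
  exact mul_right_cancel expand

theorem conj_natTprod (hcm : IsCrossedModule μ φ) (m : M) (g : G) (y : NATensor μ φ) :
    (m ⊗ g) * y * (m ⊗ g)⁻¹ = tensorAct hcm ⁅μ m, g⁆ y := by
  have h := tensorAct_mul_natTprod_comm hcm m g (tensorAct hcm (g * μ m)⁻¹ y)
  rw [← Monoid.End.map_mul_apply, ← Monoid.End.map_mul_apply, mul_inv_cancel, map_one,
    Monoid.End.coe_one, id] at h
  rw [← h, mul_inv_cancel_right, commutatorElement_def]
  congr 2
  group

theorem tensorCommutator_rels (hcm : IsCrossedModule μ φ) :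
    ∀ r ∈ tensorRels μ φ, FreeGroup.lift (fun x : M × G => ⁅μ x.1, x.2⁆) r = 1 := by
  rintro r (⟨m, m', h, rfl⟩ | ⟨m, h, h', rfl⟩) <;>
    simp only [map_mul, map_inv, FreeGroup.lift_apply_of, mul_inv_eq_one, commutatorElement_def,
      hcm.map_act] <;>
    group

def tensorCommutator (hcm : IsCrossedModule μ φ) : NATensor μ φ →* G :=
  PresentedGroup.toGroup (tensorCommutator_rels hcm)

theorem tensorCommutator_natTprod (hcm : IsCrossedModule μ φ) (m : M) (g : G) :
    tensorCommutator hcm (m ⊗ g) = ⁅μ m, g⁆ :=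
  PresentedGroup.toGroup.of (tensorCommutator_rels hcm)

theorem tensorCommutator_mem_commutator (hcm : IsCrossedModule μ φ) (x : NATensor μ φ) :
    tensorCommutator hcm x ∈ ⁅μ.range, (⊤ : Subgroup G)⁆ :=
  PresentedGroup.generated_by _ ((⁅μ.range, ⊤⁆ : Subgroup G).comap (tensorCommutator hcm))
    (fun ⟨m, g⟩ => by
      change tensorCommutator hcm (m ⊗ g) ∈ ⁅μ.range, (⊤ : Subgroup G)⁆
      rw [tensorCommutator_natTprod]
      exact Subgroup.commutator_mem_commutator ⟨m, rfl⟩ (Subgroup.mem_top g)) x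

theorem conj_eq_tensorAct (hcm : IsCrossedModule μ φ) (x y : NATensor μ φ) :
    x * y * x⁻¹ = tensorAct hcm (tensorCommutator hcm x) y := by
  suffices key : (MulDistribMulAction.toMonoidEnd _ _).comp MulAut.conj =
      (tensorAct hcm).comp (tensorCommutator hcm) from
    DFunLike.congr_fun (DFunLike.congr_fun key x) y
  refine MonoidHom.eq_of_eqOn_dense (PresentedGroup.closure_range_of _) ?_
  rintro _ ⟨⟨m, g⟩, rfl⟩
  refine MonoidHom.ext fun y => ?_
  show (m ⊗ g) * y * (m ⊗ g)⁻¹ = tensorAct hcm (tensorCommutator hcm (m ⊗ g)) y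
  rw [tensorCommutator_natTprod, conj_natTprod]

theorem tensorAct_map_natTprod (hcm : IsCrossedModule μ φ) (n m : M) (h : G) :
    tensorAct hcm (μ n) (m ⊗ h) = (n ⊗ μ m * h * (μ m)⁻¹) * (m ⊗ h) * (n ⊗ h)⁻¹ := by
  have expand := natTprod_mul_left m (m⁻¹ * n * m) h (μ := μ) (φ := φ)
  rw [hcm.peiffer, show m * (m⁻¹ * n * m) * m⁻¹ = n by group,
    show m * (m⁻¹ * n * m) = n * m by group, natTprod_mul_left_eq_tensorAct hcm] at expand
  rw [eq_mul_inv_iff_mul_eq, expand]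

variable (μ φ) in
/-- The paper's `M^k ⊗ G`, taken as a subgroup of `M ⊗ G` rather than as a tensor product. -/
def powTensor (k : ℕ) : Subgroup (NATensor μ φ) :=
  Subgroup.closure {x | ∃ m g, x = natTprod μ φ (m ^ k) g}

theorem powTensor_le_comap_tensorAct (hcm : IsCrossedModule μ φ) (k : ℕ) (g : G) :
    powTensor μ φ k ≤ (powTensor μ φ k).comap (tensorAct hcm g) :=
  (Subgroup.closure_le _).mpr fun _ ⟨m, h, hx⟩ => hx ▸ Subgroup.subset_closure
    ⟨φ g m, g * h * g⁻¹, (tensorAct_natTprod hcm g (m ^ k) h).trans (by rw [map_pow])⟩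

theorem powTensor_normal (hcm : IsCrossedModule μ φ) (k : ℕ) : (powTensor μ φ k).Normal :=
  ⟨fun y hy x => by
    rw [conj_eq_tensorAct hcm]
    exact powTensor_le_comap_tensorAct hcm k _ hy⟩

theorem sPow_range_le_precompStabilizer (hcm : IsCrossedModule μ φ) (k : ℕ) :
    sPow μ.range k ≤
      precompStabilizer (tensorAct hcm) ((↑) : NATensor μ φ → NATensor μ φ ⧸ powTensor μ φ k) := by
  have := powTensor_normal hcm k
  refine (Subgroup.closure_le _).mpr ?_
  rintro _ ⟨_, ⟨n, rfl⟩, rfl⟩ y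
  have hn : ∀ h, (n ^ k ⊗ h) ∈ powTensor μ φ k := fun h => Subgroup.subset_closure ⟨n, h, rfl⟩
  suffices key : (QuotientGroup.mk' _).comp (tensorAct hcm (μ n ^ k) : NATensor μ φ →* _) =
      QuotientGroup.mk' (powTensor μ φ k) from DFunLike.congr_fun key y
  refine PresentedGroup.ext fun ⟨m, h⟩ => ?_
  rw [← map_pow]
  show ((tensorAct hcm (μ (n ^ k)) (m ⊗ h) : NATensor μ φ) : NATensor μ φ ⧸ powTensor μ φ k) =
    (m ⊗ h)
  rw [tensorAct_map_natTprod, QuotientGroup.mk_mul, QuotientGroup.mk_mul, QuotientGroup.mk_inv,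
    (QuotientGroup.eq_one_iff _).mpr (hn _), (QuotientGroup.eq_one_iff _).mpr (hn _), one_mul,
    inv_one, mul_one]

end NATensor

theorem stmt_12_general {p : ℕ}
    {M G : Type*} [Group M] [Group G]
    (μ : M →* G) (φ : G →* MulAut M) (hcm : IsCrossedModule μ φ)
    (hemb : ⁅μ.range, (⊤ : Subgroup G)⁆ ≤ sPow μ.range p) :
    ⁅(⊤ : Subgroup (NATensor μ φ)), (⊤ : Subgroup (NATensor μ φ))⁆ ≤
      Subgroup.closure {x : NATensor μ φ | ∃ m g, x = natTprod μ φ (m ^ p) g} := by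
  change _ ≤ powTensor μ φ p
  have := powTensor_normal hcm p
  exact commutator_le_of_conj_eq (conj_eq_tensorAct hcm) fun x =>
    sPow_range_le_precompStabilizer hcm p (hemb (tensorCommutator_mem_commutator hcm x))

theorem stmt_12 {p : ℕ} (hp : p.Prime) (hodd : Odd p)
    {M G : Type*} [Group M] [Group G] [Finite M] [Finite G]
    (hM : IsPGroup p M) (hG : IsPGroup p G)
    (μ : M →* G) (φ : G →* MulAut M) (hcm : IsCrossedModule μ φ)
    (hMpow : ⁅(⊤ : Subgroup M), (⊤ : Subgroup M)⁆ ≤ sPow (⊤ : Subgroup M) p)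
    (hemb : ⁅μ.range, (⊤ : Subgroup G)⁆ ≤ sPow μ.range p) :
    ⁅(⊤ : Subgroup (NATensor μ φ)), (⊤ : Subgroup (NATensor μ φ))⁆ ≤
      Subgroup.closure {x : NATensor μ φ | ∃ m g, x = natTprod μ φ (m ^ p) g} :=
  stmt_12_general μ φ hcm hemb
end

section
/- Let G be a pro-p group and N a closed normal subgroup. Then N is powerfully embedded in G if and only if NK/K is powerfully embedded in G/K for every open normal subgroup K of G. -/
/-- A pro-`p` group: a profinite group all of whose continuous finite quotients
are `p`-groups. -/
def IsProPGroup (p : ℕ) (H : Type*) [Group H] [TopologicalSpace H] [IsTopologicalGroup H] : Prop :=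
  CompactSpace H ∧ TotallyDisconnectedSpace H ∧
    ∀ U : Subgroup H, IsOpen (U : Set H) → IsPGroup p (H ⧸ U.normalCore)

/-! In a profinite group the open normal subgroups form a basis of neighbourhoods of `1`, so an
element lies in the closure of a subgroup `L` exactly when its image in every finite quotient
`G/K` lies in the image of `L`. Both the commutator `[N, G]` and the power subgroup `N^p` commute
with passing to quotients, so `[N, G] ≤ closure (N^p)` can be tested in each `G/K`. -/

open QuotientGroup

lemma sPow_map {G H : Type*} [Group G] [Group H] (f : G →* H) (N : Subgroup G) (k : ℕ) :
    (sPow N k).map f = sPow (N.map f) k := by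
  simp only [sPow, MonoidHom.map_closure, Subgroup.coe_map, Set.image_image, map_pow]

lemma Subgroup.map_commutator_top_of_surjective {G H : Type*} [Group G] [Group H] {f : G →* H}
    (hf : Function.Surjective f) (N : Subgroup G) :
    ⁅N, (⊤ : Subgroup G)⁆.map f = ⁅N.map f, (⊤ : Subgroup H)⁆ := by
  rw [Subgroup.map_commutator, Subgroup.map_top_of_surjective f hf]

section TopologicalGroup

variable {G : Type*} [Group G] [TopologicalSpace G] [IsTopologicalGroup G]

lemma Subgroup.topologicalClosure_le_sup_of_isOpen {K : Subgroup G} (hK : IsOpen (K : Set G))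
    (L : Subgroup G) : L.topologicalClosure ≤ K ⊔ L :=
  L.topologicalClosure_minimal le_sup_right
    ((K ⊔ L).isClosed_of_isOpen (Subgroup.isOpen_mono le_sup_left hK))

lemma Subgroup.mem_topologicalClosure_of_forall_mk_mem_map [CompactSpace G]
    [TotallyDisconnectedSpace G] {L : Subgroup G} {x : G}
    (h : ∀ K : OpenNormalSubgroup G, mk' K.toSubgroup x ∈ L.map (mk' K.toSubgroup)) :
    x ∈ L.topologicalClosure := by
  refine mem_closure_iff.mpr fun U hU hxU ↦ ?_
  obtain ⟨K, hKU⟩ := ProfiniteGrp.exist_openNormalSubgroup_sub_open_nhds_of_one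
    (hU.preimage (continuous_const_mul x)) (by simpa using hxU)
  obtain ⟨y, hyL, hyx⟩ := h K
  exact ⟨y, by simpa using hKU (QuotientGroup.eq.mp hyx.symm), hyL⟩

theorem Subgroup.le_topologicalClosure_iff_forall_map_le [CompactSpace G]
    [TotallyDisconnectedSpace G] (H L : Subgroup G) :
    H ≤ L.topologicalClosure ↔
      ∀ (K : Subgroup G) [K.Normal], IsOpen (K : Set G) → H.map (mk' K) ≤ L.map (mk' K) := by
  refine ⟨fun h K _ hK ↦ ?_, fun h x hx ↦ ?_⟩
  · rw [Subgroup.map_le_iff_le_comap, comap_map_mk']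
    exact h.trans (topologicalClosure_le_sup_of_isOpen hK L)
  · exact mem_topologicalClosure_of_forall_mk_mem_map fun K ↦
      h K.toSubgroup K.isOpen' (Subgroup.mem_map_of_mem _ hx)

end TopologicalGroup

theorem stmt_19_general {p : ℕ}
    {G : Type*} [Group G] [TopologicalSpace G] [IsTopologicalGroup G]
    (hpro : IsProPGroup p G)
    (N : Subgroup G) :
    (⁅N, (⊤ : Subgroup G)⁆ ≤ (sPow N p).topologicalClosure) ↔
      ∀ (K : Subgroup G) [K.Normal], IsOpen (K : Set G) →
        ⁅N.map (QuotientGroup.mk' K), (⊤ : Subgroup (G ⧸ K))⁆ ≤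
          sPow (N.map (QuotientGroup.mk' K)) p := by
  obtain ⟨_, _, -⟩ := hpro
  rw [Subgroup.le_topologicalClosure_iff_forall_map_le]
  refine forall_congr' fun K ↦ forall_congr' fun _ ↦ forall_congr' fun _ ↦ ?_
  rw [Subgroup.map_commutator_top_of_surjective (mk'_surjective K), sPow_map]

theorem stmt_19 {p : ℕ} (hp : p.Prime) (hodd : Odd p)
    {G : Type*} [Group G] [TopologicalSpace G] [IsTopologicalGroup G]
    (hpro : IsProPGroup p G)
    (N : Subgroup G) [N.Normal] (hclosed : IsClosed (N : Set G)) :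
    (⁅N, (⊤ : Subgroup G)⁆ ≤ (sPow N p).topologicalClosure) ↔
      ∀ (K : Subgroup G) [K.Normal], IsOpen (K : Set G) →
        ⁅N.map (QuotientGroup.mk' K), (⊤ : Subgroup (G ⧸ K))⁆ ≤
          sPow (N.map (QuotientGroup.mk' K)) p :=
  stmt_19_general hpro N
end
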